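/- arXiv:1801.08456 — 6 statements merged into one kernel-verified Lean document; each statement's English description precedes it below -/
import Mathlib

section
/- The centralizer of a determining set D of a group G equals the center of G. -/
/-- A subset `D` of a group `G` is a determining set if the only automorphism of `G`
fixing every element of `D` is the identity. -/
def IsDetermining {G : Type*} [Group G] (D : Set G) : Prop :=
  ∀ φ : G ≃* G, (∀ x ∈ D, φ x = x) → φ = MulEquiv.refl G

/-- The determining number: the minimum size of a (finite) determining set. -/
noncomputable def detNumber (G : Type*) [Group G] : ℕ :=
  sInf {n | ∃ D : Finset G, D.card = n ∧ IsDetermining (D : Set G)}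

/-- The generating number: the minimum size of a (finite) generating set. -/
noncomputable def genNumber (G : Type*) [Group G] : ℕ :=
  sInf {n | ∃ D : Finset G, D.card = n ∧ Subgroup.closure (D : Set G) = ⊤}

section

variable {G : Type*} [Group G]

theorem MulAut.conj_apply_eq_self_iff {g x : G} : MulAut.conj g x = x ↔ x * g = g * x := by
  rw [MulAut.conj_apply, mul_inv_eq_iff_eq_mul, eq_comm]

theorem MulAut.conj_eq_refl_iff_mem_center {g : G} :
    MulAut.conj g = MulEquiv.refl G ↔ g ∈ Subgroup.center G := by
  rw [Subgroup.mem_center_iff, MulEquiv.ext_iff]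
  exact forall_congr' fun _ => MulAut.conj_apply_eq_self_iff

theorem IsDetermining.centralizer_le_center {D : Set G} (hD : IsDetermining D) :
    Subgroup.centralizer D ≤ Subgroup.center G := fun _ hg =>
  MulAut.conj_eq_refl_iff_mem_center.mp <|
    hD _ fun x hx => MulAut.conj_apply_eq_self_iff.mpr (Subgroup.mem_centralizer_iff.mp hg x hx)

end

theorem stmt4 {G : Type*} [Group G] (D : Set G) (hD : IsDetermining D) :
    Subgroup.centralizer D = Subgroup.center G :=
  le_antisymm hD.centralizer_le_center (Subgroup.center_le_centralizer D)
end

section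
/- If G is a finite group of order n with determining number m, then the automorphism group of G has order at most (n−1)!/(n−m−1)!. -/
/-!
An automorphism is determined by its values on a determining set `D`, and it maps `D`
injectively into `G \ {1}`; moreover a minimum determining set avoids `1`, which every
automorphism fixes anyway. Hence `|Aut G|` is at most the number `(n - 1)! / (n - 1 - m)!`
of injections of an `m`-element set into `G \ {1}`.
-/

section

variable {G : Type*} [Group G]

def MulEquiv.restrictNeOne {D : Set G} (h1 : (1 : G) ∉ D) (φ : G ≃* G) :
    D ↪ {x : G // x ≠ 1} where
  toFun d := ⟨φ d, fun h => h1 (by simpa [φ.map_eq_one_iff.mp h] using d.2)⟩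
  inj' _ _ h := Subtype.ext (φ.injective (congrArg Subtype.val h))

namespace IsDetermining

theorem eq_of_eqOn {D : Set G} (hD : IsDetermining D) {φ ψ : G ≃* G}
    (h : Set.EqOn φ ψ D) : φ = ψ := by
  have hφψ : φ.trans ψ.symm = MulEquiv.refl G :=
    hD _ fun x hx => by simp [MulEquiv.trans_apply, h hx]
  ext x
  simpa [ψ.symm_apply_eq] using DFunLike.congr_fun hφψ x

theorem diff_one {D : Set G} (hD : IsDetermining D) : IsDetermining (D \ {1}) :=
  fun φ hφ => hD φ fun x hx => by
    by_cases hx1 : x = 1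
    · simp [hx1]
    · exact hφ x ⟨hx, hx1⟩

theorem injective_restrictNeOne {D : Set G} (hD : IsDetermining D) (h1 : (1 : G) ∉ D) :
    Function.Injective (MulEquiv.restrictNeOne h1) :=
  fun _ _ h => hD.eq_of_eqOn fun x hx =>
    congrArg Subtype.val (DFunLike.congr_fun h (⟨x, hx⟩ : D))

theorem card_mulEquiv_le [Finite G] {D : Finset G} (hD : IsDetermining (D : Set G))
    (h1 : (1 : G) ∉ D) : Nat.card (G ≃* G) ≤ (Nat.card G - 1).descFactorial D.card := by
  classical
  have : Fintype G := Fintype.ofFinite G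
  calc Nat.card (G ≃* G) ≤ Nat.card ((D : Set G) ↪ {x : G // x ≠ 1}) :=
        Nat.card_le_card_of_injective _ (hD.injective_restrictNeOne h1)
    _ = (Nat.card G - 1).descFactorial D.card := by
        simp [Nat.card_eq_fintype_card, Fintype.card_embedding_eq, Fintype.card_subtype_compl]

end IsDetermining

theorem detNumber_le_card {D : Finset G} (hD : IsDetermining (D : Set G)) :
    detNumber G ≤ D.card :=
  Nat.sInf_le ⟨D, rfl, hD⟩

theorem exists_isDetermining_card_eq_detNumber [Finite G] :
    ∃ D : Finset G, D.card = detNumber G ∧ IsDetermining (D : Set G) ∧ (1 : G) ∉ D := by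
  classical
  have : Fintype G := Fintype.ofFinite G
  have hne : {k | ∃ D : Finset G, D.card = k ∧ IsDetermining (D : Set G)}.Nonempty :=
    ⟨_, Finset.univ, rfl, fun φ h => MulEquiv.ext fun x => h x (by simp)⟩
  obtain ⟨D, hDcard, hD⟩ := Nat.sInf_mem hne
  refine ⟨D, hDcard, hD, fun h1 => ?_⟩
  have hle := detNumber_le_card (D := D.erase 1) (by simpa using hD.diff_one)
  rw [Finset.card_erase_of_mem h1] at hle
  have hpos : 0 < D.card := Finset.card_pos.2 ⟨1, h1⟩
  change D.card = detNumber G at hDcard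
  omega

end

theorem Nat.descFactorial_le_factorial_div (n k : ℕ) :
    n.descFactorial k ≤ n.factorial / (n - k).factorial := by
  rcases le_or_gt k n with hle | hlt
  · exact (Nat.descFactorial_eq_div hle).le
  · simp [Nat.descFactorial_eq_zero_iff_lt.2 hlt]

theorem stmt5 {G : Type*} [Group G] [Finite G] (n m : ℕ)
    (hn : Nat.card G = n) (hm : detNumber G = m) :
    Nat.card (G ≃* G) ≤ (n - 1).factorial / (n - m - 1).factorial := by
  obtain ⟨D, hDcard, hD, h1⟩ := exists_isDetermining_card_eq_detNumber (G := G)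
  calc Nat.card (G ≃* G) ≤ (n - 1).descFactorial m := by
        simpa [hn, hDcard, hm] using hD.card_mulEquiv_le h1
    _ ≤ (n - 1).factorial / (n - 1 - m).factorial := Nat.descFactorial_le_factorial_div _ _
    _ = (n - 1).factorial / (n - m - 1).factorial := by rw [Nat.sub_right_comm]
end

section
/- The determining number of ℤ/p^k ℤ × ℤ/p^l ℤ equals 2 for any prime p and positive integers k, l. -/
/-! The two coordinate generators `(1, 0)` and `(0, 1)` form a determining set, since an
automorphism is determined by its values on generators. Conversely, every single element `g` of
`A = ℤ/p^k × ℤ/p^l` is fixed by a nontrivial automorphism `x ↦ x + f x`, where `f` is a nonzero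
square-zero endomorphism with `f g = 0`. Such an `f` is `x ↦ ι (ℓ (π x) • v)`, where
`π : A → 𝔽_p²` is reduction mod `p`, `ι : 𝔽_p² → A` embeds `𝔽_p²` into the `p`-torsion, `ℓ` is a
nonzero functional vanishing at `π g`, and `v ≠ 0` satisfies `ℓ (π (ι v)) = 0`; both `ℓ` and `v`
exist because a linear functional on a plane has a nonzero kernel. -/

open Function Module

section Determining

variable {G : Type*} [Group G]

theorem IsDetermining.mono {D E : Set G} (hD : IsDetermining D) (hDE : D ⊆ E) :
    IsDetermining E :=
  fun φ hφ => hD φ fun x hx => hφ x (hDE hx)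

theorem isDetermining_of_closure_eq_top {D : Set G} (hD : Subgroup.closure D = ⊤) :
    IsDetermining D :=
  fun _ hφ => MulEquiv.toMonoidHom_injective (MonoidHom.eq_of_eqOn_dense hD hφ)

theorem detNumber_eq_two {D : Finset G} (hcard : D.card = 2) (hD : IsDetermining (D : Set G))
    (hsingleton : ∀ g : G, ¬ IsDetermining ({g} : Set G)) : detNumber G = 2 := by
  have hmem : 2 ∈ {n | ∃ D : Finset G, D.card = n ∧ IsDetermining (D : Set G)} := ⟨D, hcard, hD⟩
  refine le_antisymm (Nat.sInf_le hmem) (le_csInf ⟨2, hmem⟩ ?_)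
  rintro n ⟨E, rfl, hE⟩
  by_contra! hlt
  obtain ⟨g, hEg⟩ := Finset.card_le_one_iff_subset_singleton.mp (Nat.le_of_lt_succ hlt)
  exact hsingleton g (hE.mono (by exact_mod_cast hEg))

end Determining

theorem LinearMap.exists_ne_zero_apply_eq_zero {K V : Type*} [Field K] [AddCommGroup V]
    [Module K V] [FiniteDimensional K V] (hV : 1 < finrank K V) (f : V →ₗ[K] K) :
    ∃ v ≠ 0, f v = 0 := by
  have hker : LinearMap.ker f ≠ ⊥ := f.ker_ne_bot_of_finrank_lt (by rwa [finrank_self])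
  obtain ⟨v, hv, hv0⟩ := (Submodule.ne_bot_iff _).mp hker
  exact ⟨v, hv0, hv⟩

theorem exists_injective_zmod_addMonoidHom {p : ℕ} [Fact p.Prime] {B : Type*} [AddCommGroup B]
    [Finite B] (hp : p ∣ Nat.card B) : ∃ u : ZMod p →+ B, Injective u := by
  obtain ⟨w, hw⟩ := exists_prime_addOrderOf_dvd_card' p hp
  refine ⟨ZMod.lift p ⟨zmultiplesHom B w, by simp [← hw, addOrderOf_nsmul_eq_zero]⟩,
    (ZMod.lift_injective p).mpr fun m hm => ?_⟩
  rw [ZMod.intCast_zmod_eq_zero_iff_dvd, ← hw]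
  exact addOrderOf_dvd_iff_zsmul_eq_zero.mpr hm

section SquareZero

variable {A : Type*} [AddCommGroup A]

@[simps]
def AddEquiv.oneAddOfSquareZero (f : A →+ A) (hf : ∀ x, f (f x) = 0) : A ≃+ A where
  toFun x := x + f x
  invFun x := x - f x
  left_inv x := by simp [hf]
  right_inv x := by simp [hf]
  map_add' x y := by simp only [map_add]; abel

theorem not_isDetermining_singleton_ofAdd {f : A →+ A} (hff : ∀ x, f (f x) = 0) (hf : f ≠ 0)
    {g : A} (hfg : f g = 0) :
    ¬ IsDetermining ({Multiplicative.ofAdd g} : Set (Multiplicative A)) := by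
  intro hD
  have hid := hD (AddEquiv.oneAddOfSquareZero f hff).toMultiplicative (by simp [hfg])
  refine hf (AddMonoidHom.ext fun x => ?_)
  simpa using DFunLike.congr_fun hid (Multiplicative.ofAdd x)

theorem exists_squareZero_apply_eq_zero {p : ℕ} [Fact p.Prime] {V : Type*} [AddCommGroup V]
    [Module (ZMod p) V] [FiniteDimensional (ZMod p) V] (hV : 1 < finrank (ZMod p) V)
    {π : A →+ V} (hπ : Surjective π) {ι : V →+ A} (hι : Injective ι) (g : A) :
    ∃ f : A →+ A, (∀ x, f (f x) = 0) ∧ f ≠ 0 ∧ f g = 0 := by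
  obtain ⟨ℓ, hℓ0, hℓg⟩ := LinearMap.exists_ne_zero_apply_eq_zero
    (by rwa [Subspace.dual_finrank_eq]) (Module.Dual.eval (ZMod p) V (π g))
  obtain ⟨v, hv0, hℓv⟩ :=
    LinearMap.exists_ne_zero_apply_eq_zero hV (ℓ ∘ₗ (π.comp ι).toZModLinearMap p)
  let f : A →+ A := ι.comp (((ℓ.smulRight v).toAddMonoidHom).comp π)
  have hf : ∀ x, f x = ι (ℓ (π x) • v) := fun x => rfl
  refine ⟨f, fun x => ?_, fun hf0 => ?_, ?_⟩
  · have hℓv' : ℓ (π (ι v)) = 0 := hℓv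
    have hπι : π (ι (ℓ (π x) • v)) = ℓ (π x) • π (ι v) := ZMod.map_smul (π.comp ι) _ v
    rw [hf, hf, hπι, ℓ.map_smul, hℓv', smul_zero, zero_smul, map_zero]
  · obtain ⟨y, hy⟩ : ∃ y, ℓ y ≠ 0 := by
      by_contra! h
      exact hℓ0 (LinearMap.ext h)
    obtain ⟨x, rfl⟩ := hπ y
    have hfx : f x ≠ 0 := by
      rw [hf, map_ne_zero_iff _ hι]
      exact smul_ne_zero hy hv0
    exact hfx (DFunLike.congr_fun hf0 x)
  · rw [hf, show ℓ (π g) = 0 from hℓg, zero_smul, map_zero]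

end SquareZero

theorem closure_ofAdd_one_zero_zero_one (m n : ℕ) :
    Subgroup.closure {Multiplicative.ofAdd ((1 : ZMod m), (0 : ZMod n)),
      Multiplicative.ofAdd (0, 1)} = ⊤ := by
  refine (Subgroup.eq_top_iff' _).mpr fun x => ?_
  have hx : x = Multiplicative.ofAdd ((1 : ZMod m), (0 : ZMod n)) ^ (x.toAdd.1.cast : ℤ) *
      Multiplicative.ofAdd (0, 1) ^ (x.toAdd.2.cast : ℤ) := by
    simp [← ofAdd_zsmul, ← ofAdd_add]
  rw [hx]
  exact mul_mem (zpow_mem (Subgroup.subset_closure (by simp)) _)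
    (zpow_mem (Subgroup.subset_closure (by simp)) _)

theorem exists_squareZero_zmod_prime_pow_prod {p k l : ℕ} [Fact p.Prime] (hk : 0 < k) (hl : 0 < l)
    (g : ZMod (p ^ k) × ZMod (p ^ l)) :
    ∃ f : (ZMod (p ^ k) × ZMod (p ^ l)) →+ (ZMod (p ^ k) × ZMod (p ^ l)),
      (∀ x, f (f x) = 0) ∧ f ≠ 0 ∧ f g = 0 := by
  have hdvd {j : ℕ} (hj : 0 < j) : p ∣ p ^ j := dvd_pow_self p hj.ne'
  obtain ⟨uk, huk⟩ := exists_injective_zmod_addMonoidHom (p := p) (B := ZMod (p ^ k))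
    (by rw [Nat.card_zmod]; exact hdvd hk)
  obtain ⟨ul, hul⟩ := exists_injective_zmod_addMonoidHom (p := p) (B := ZMod (p ^ l))
    (by rw [Nat.card_zmod]; exact hdvd hl)
  let π := (ZMod.castHom (hdvd hk) (ZMod p)).toAddMonoidHom.prodMap
    (ZMod.castHom (hdvd hl) (ZMod p)).toAddMonoidHom
  have hπ : Surjective π := Prod.map_surjective.mpr
    ⟨ZMod.castHom_surjective (hdvd hk), ZMod.castHom_surjective (hdvd hl)⟩
  exact exists_squareZero_apply_eq_zero (p := p) (V := ZMod p × ZMod p)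
    (by rw [finrank_prod, finrank_self]; norm_num) hπ
    (ι := uk.prodMap ul) (Prod.map_injective.mpr ⟨huk, hul⟩) g

theorem stmt9 (p k l : ℕ) (hp : p.Prime) (hk : 0 < k) (hl : 0 < l) :
    detNumber (Multiplicative (ZMod (p ^ k) × ZMod (p ^ l))) = 2 := by
  have := Fact.mk hp
  have : Fact (1 < p ^ k) := ⟨Nat.one_lt_pow hk.ne' hp.one_lt⟩
  refine detNumber_eq_two (D := {Multiplicative.ofAdd (1, 0), Multiplicative.ofAdd (0, 1)})
    (Finset.card_pair (by simp))
    (isDetermining_of_closure_eq_top (by simpa using closure_ofAdd_one_zero_zero_one _ _))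
    fun g => ?_
  obtain ⟨f, hff, hf0, hfg⟩ := exists_squareZero_zmod_prime_pow_prod hk hl g.toAdd
  exact not_isDetermining_singleton_ofAdd hff hf0 hfg
end

section
/- Let G be a finite group, p a prime, and M a normal subgroup of index p in G such that M ∩ Z(G) contains an element of order p. Then G has a non-identity automorphism that fixes every element of M. -/
section MulSelfAut

variable {G : Type*} [Group G]

def MonoidHom.mulSelfAut (χ : G →* G) (hcent : ∀ x, χ x ∈ Subgroup.center G)
    (hsq : ∀ x, χ (χ x) = 1) : G ≃* G where
  toFun x := x * χ x
  invFun x := x * (χ x)⁻¹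
  left_inv x := by simp [hsq]
  right_inv x := by simp [hsq]
  map_mul' x y := calc
    x * y * χ (x * y) = x * (y * χ x) * χ y := by rw [map_mul]; group
    _ = x * χ x * (y * χ y) := by rw [Subgroup.mem_center_iff.mp (hcent x) y]; group

@[simp]
theorem MonoidHom.mulSelfAut_apply (χ : G →* G) (hcent : ∀ x, χ x ∈ Subgroup.center G)
    (hsq : ∀ x, χ (χ x) = 1) (x : G) : χ.mulSelfAut hcent hsq x = x * χ x :=
  rfl

theorem MonoidHom.mulSelfAut_ne_refl (χ : G →* G) (hcent : ∀ x, χ x ∈ Subgroup.center G)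
    (hsq : ∀ x, χ (χ x) = 1) (hχ : χ ≠ 1) : χ.mulSelfAut hcent hsq ≠ MulEquiv.refl G := by
  intro h
  apply hχ
  ext x
  simpa using DFunLike.congr_fun h x

end MulSelfAut

theorem stmt14_general {G : Type*} [Group G] (p : ℕ) (hp : p.Prime)
    (M : Subgroup G) [M.Normal] (hidx : M.index = p)
    (hz : ∃ z : G, z ∈ M ⊓ Subgroup.center G ∧ orderOf z = p) :
    ∃ φ : G ≃* G, φ ≠ MulEquiv.refl G ∧ ∀ x ∈ M, φ x = x := by
  obtain ⟨z, ⟨hzM, hzc⟩, hzo⟩ := hz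
  have : Fact p.Prime := ⟨hp⟩
  let e : G ⧸ M ≃* Subgroup.zpowers z := mulEquivOfPrimeCardEq hidx (Nat.card_zpowers z ▸ hzo)
  let χ : G →* G := (Subgroup.zpowers z).subtype.comp (e.toMonoidHom.comp (QuotientGroup.mk' M))
  have hχz (x : G) : χ x ∈ Subgroup.zpowers z := (e _).2
  have hχM (x : G) (hx : x ∈ M) : χ x = 1 := by
    simp [χ, (QuotientGroup.eq_one_iff x).mpr hx]
  have hcent (x : G) : χ x ∈ Subgroup.center G := Subgroup.zpowers_le.mpr hzc (hχz x)
  have hsq (x : G) : χ (χ x) = 1 := hχM _ (Subgroup.zpowers_le.mpr hzM (hχz x))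
  have hχ : χ ≠ 1 := by
    obtain ⟨g, hg⟩ := QuotientGroup.mk'_surjective M (e.symm ⟨z, Subgroup.mem_zpowers z⟩)
    have hχg : χ g = z := by
      change (e (QuotientGroup.mk' M g) : G) = z
      rw [hg, e.apply_symm_apply]
    intro h
    have hz1 : z = 1 := by rw [← hχg, h, MonoidHom.one_apply]
    exact hp.one_lt.ne' (by rw [← hzo, hz1, orderOf_one])
  exact ⟨χ.mulSelfAut hcent hsq, χ.mulSelfAut_ne_refl hcent hsq hχ,
    fun x hx => by simp [hχM x hx]⟩

theorem stmt14 {G : Type*} [Group G] [Finite G] (p : ℕ) (hp : p.Prime)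
    (M : Subgroup G) [M.Normal] (hidx : M.index = p)
    (hz : ∃ z : G, z ∈ M ⊓ Subgroup.center G ∧ orderOf z = p) :
    ∃ φ : G ≃* G, φ ≠ MulEquiv.refl G ∧ ∀ x ∈ M, φ x = x :=
  stmt14_general p hp M hidx hz
end

section
/- Every finite p-group of order at least 3 satisfies α(G) = γ(G), i.e., its determining number equals its minimal number of generators. -/
/-!
A generating set is determining in any group, since an automorphism is determined by its values on
generators. Conversely, it suffices to fix each proper subgroup `H` of `G` pointwise by a nontrivial
automorphism. Enlarge `H` to a maximal subgroup `M`, which is normal since `G` is nilpotent. If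
`M = 1`, then `G` is cyclic of order at least 3 and inversion works. Otherwise the normal subgroup
`M` meets the centre in an element `z` of order `p`; as `G ⧸ M` is cyclic of `p`-power order, there
is a nontrivial `f : G →* ⟨z⟩` killing `M`, and `g ↦ g * f g` is an automorphism fixing `M`.
-/

open Subgroup

section Determining

variable {G : Type*} [Group G]

theorem IsDetermining.of_closure_eq_top {D : Set G} (hD : closure D = ⊤) : IsDetermining D :=
  fun _ hφ => MulEquiv.toMonoidHom_injective <| MonoidHom.eq_of_eqOn_dense hD hφ

theorem closure_eq_top_of_isDetermining
    (hG : ∀ H : Subgroup G, H ≠ ⊤ → ∃ φ : G ≃* G, φ ≠ MulEquiv.refl G ∧ ∀ x ∈ H, φ x = x)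
    {D : Set G} (hD : IsDetermining D) : closure D = ⊤ := by
  by_contra hne
  obtain ⟨φ, hφ, hfix⟩ := hG _ hne
  exact hφ (hD φ fun x hx => hfix x (subset_closure hx))

end Determining

namespace MonoidHom

variable {G : Type*} [Group G]

def selfMulEquiv (f : G →* G) (hcen : f.range ≤ center G) (hsq : f.range ≤ f.ker) : G ≃* G where
  toFun g := g * f g
  invFun g := g * (f g)⁻¹
  left_inv g := by
    simp [mem_ker.mp (hsq ⟨g, rfl⟩)]
  right_inv g := by
    simp [mem_ker.mp (hsq ⟨g, rfl⟩)]
  map_mul' a b := by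
    simp only [map_mul]
    rw [mul_assoc a b, ← mul_assoc b, mem_center_iff.mp (hcen ⟨a, rfl⟩) b]
    simp only [mul_assoc]

variable (f : G →* G) (hcen : f.range ≤ center G) (hsq : f.range ≤ f.ker)

@[simp]
theorem selfMulEquiv_apply (g : G) : f.selfMulEquiv hcen hsq g = g * f g := rfl

theorem selfMulEquiv_eq_refl_iff : f.selfMulEquiv hcen hsq = MulEquiv.refl G ↔ f = 1 := by
  simp [MulEquiv.ext_iff, MonoidHom.ext_iff]

end MonoidHom

theorem IsCyclic.exists_mulEquiv_ne_refl {G : Type*} [Group G] [IsCyclic G]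
    (h3 : 3 ≤ Nat.card G) : ∃ φ : G ≃* G, φ ≠ MulEquiv.refl G := by
  let := IsCyclic.commGroup (α := G)
  obtain ⟨g, hg⟩ := IsCyclic.exists_generator (α := G)
  refine ⟨MulEquiv.inv G, fun h => ?_⟩
  have hg2 : g ^ 2 = 1 := by
    rw [pow_two, ← inv_eq_iff_mul_eq_one]
    exact DFunLike.congr_fun h g
  have := Nat.le_of_dvd two_pos (orderOf_dvd_of_pow_eq_one hg2)
  rw [orderOf_eq_card_of_forall_mem_zpowers hg] at this
  omega

theorem Subgroup.isCyclic_of_isCoatom_bot {G : Type*} [Group G] (h : IsCoatom (⊥ : Subgroup G)) :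
    IsCyclic G := by
  obtain ⟨x, -, hx⟩ := (bot_or_exists_ne_one (⊤ : Subgroup G)).resolve_left h.1.symm
  exact isCyclic_iff_exists_zpowers_eq_top.mpr
    ⟨x, h.2 _ (bot_lt_iff_ne_bot.mpr (zpowers_ne_bot.mpr hx))⟩

theorem Subgroup.mem_zpowers_of_isCoatom {G : Type*} [Group G] {M : Subgroup G} [M.Normal]
    (hM : IsCoatom M) {q : G ⧸ M} (hq : q ≠ 1) (y : G ⧸ M) : y ∈ zpowers q := by
  obtain ⟨x, rfl⟩ := QuotientGroup.mk_surjective q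
  obtain ⟨g, rfl⟩ := QuotientGroup.mk_surjective y
  have hlt : M < comap (QuotientGroup.mk' M) (zpowers (x : G ⧸ M)) :=
    SetLike.lt_iff_le_and_exists.mpr
      ⟨fun m hm => by simp [(QuotientGroup.eq_one_iff m).mpr hm],
        x, mem_zpowers _, fun hx => hq ((QuotientGroup.eq_one_iff x).mpr hx)⟩
  have hg : g ∈ comap (QuotientGroup.mk' M) (zpowers (x : G ⧸ M)) := hM.2 _ hlt ▸ mem_top g
  exact hg

theorem IsPGroup.exists_orderOf_eq_mem_inf_center {p : ℕ} [Fact p.Prime] {G : Type*} [Group G]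
    [Finite G] (hG : IsPGroup p G) {N : Subgroup G} [N.Normal] (hN : N ≠ ⊥) :
    ∃ z ∈ N ⊓ center G, orderOf z = p := by
  have hpN : p ∣ Nat.card N :=
    (hG.to_subgroup N).card_eq_or_dvd.resolve_left (card_eq_one.not.mpr hN)
  -- a nontrivial fixed point of the conjugation action on `N` is a central element of `N`
  obtain ⟨b, hb, hb1⟩ :=
    (hG.of_equiv ConjAct.toConjAct).exists_fixed_point_of_prime_dvd_card_of_fixed_point
      N hpN (a := 1) (fun g => by simp)
  have hbZ : (b : G) ∈ center G := by
    refine mem_center_iff.mpr fun g => mul_inv_eq_iff_eq_mul.mp ?_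
    have := congrArg Subtype.val (hb (ConjAct.toConjAct g))
    rwa [ConjAct.Subgroup.val_conj_smul, ConjAct.toConjAct_smul] at this
  have hpK : p ∣ Nat.card (N ⊓ center G : Subgroup G) := by
    refine (hG.to_subgroup _).card_eq_or_dvd.resolve_left fun h => hb1 ?_
    have hbK : (b : G) ∈ (⊥ : Subgroup G) := card_eq_one.mp h ▸ ⟨b.2, hbZ⟩
    exact Subtype.ext (mem_bot.mp hbK).symm
  obtain ⟨z, hz⟩ := exists_prime_orderOf_dvd_card' p hpK
  exact ⟨z, z.2, (orderOf_coe z).trans hz⟩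

namespace IsPGroup

variable {p : ℕ} [Fact p.Prime] {G : Type*} [Group G] [Finite G] (hG : IsPGroup p G)
include hG

theorem exists_monoidHom_ne_one_of_isCoatom {M : Subgroup G} [M.Normal] (hM : IsCoatom M)
    (hM' : M ≠ ⊥) : ∃ f : G →* G, f ≠ 1 ∧ f.range ≤ M ⊓ center G ∧ M ≤ f.ker := by
  obtain ⟨z, hzK, hz⟩ := hG.exists_orderOf_eq_mem_inf_center hM'
  obtain ⟨x, hx⟩ := SetLike.exists_not_mem_of_ne_top M hM.1 rfl
  have hq : (x : G ⧸ M) ≠ 1 := fun h => hx ((QuotientGroup.eq_one_iff x).mp h)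
  have hdvd : orderOf z ∣ orderOf (x : G ⧸ M) := hz ▸ (hG.to_quotient M).dvd_orderOf hq
  let χ := monoidHomOfForallMemZpowers (mem_zpowers_of_isCoatom hM hq) hdvd
  refine ⟨χ.comp (QuotientGroup.mk' M), fun h => ?_, ?_, fun m hm => ?_⟩
  · have hz1 : z = 1 := by simpa [χ] using DFunLike.congr_fun h x
    exact (Fact.out : p.Prime).one_lt.ne (by simpa [hz1] using hz)
  · rintro _ ⟨g, rfl⟩
    obtain ⟨n, hn⟩ := mem_zpowers_iff.mp (mem_zpowers_of_isCoatom hM hq g)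
    simpa [χ, ← hn] using zpow_mem hzK n
  · simp [(QuotientGroup.eq_one_iff m).mpr hm]

theorem exists_mulEquiv_ne_refl_fixing (h3 : 3 ≤ Nat.card G) {H : Subgroup G} (hH : H ≠ ⊤) :
    ∃ φ : G ≃* G, φ ≠ MulEquiv.refl G ∧ ∀ x ∈ H, φ x = x := by
  obtain ⟨M, hM, hHM⟩ := (eq_top_or_exists_le_coatom H).resolve_left hH
  have : Group.IsNilpotent G := hG.isNilpotent
  have : M.Normal := (Group.normalizerCondition_of_isNilpotent (G := G)).normal_of_coatom M hM
  rcases eq_or_ne M ⊥ with rfl | hM'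
  · have := isCyclic_of_isCoatom_bot hM
    obtain ⟨φ, hφ⟩ := IsCyclic.exists_mulEquiv_ne_refl h3
    exact ⟨φ, hφ, fun x hx => by rw [mem_bot.mp (hHM hx), map_one]⟩
  · obtain ⟨f, hf, hcen, hker⟩ := hG.exists_monoidHom_ne_one_of_isCoatom hM hM'
    refine ⟨f.selfMulEquiv (hcen.trans inf_le_right) (hcen.trans (inf_le_left.trans hker)),
      (f.selfMulEquiv_eq_refl_iff _ _).not.mpr hf, fun x hx => ?_⟩
    simpa using hker (hHM hx)

end IsPGroup

theorem stmt15 {G : Type*} [Group G] [Finite G] (p : ℕ) (hp : p.Prime)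
    (hpG : IsPGroup p G) (h3 : 3 ≤ Nat.card G) :
    detNumber G = genNumber G := by
  have := Fact.mk hp
  have hiff (D : Finset G) : IsDetermining (D : Set G) ↔ closure (D : Set G) = ⊤ :=
    ⟨closure_eq_top_of_isDetermining fun _ hH => hpG.exists_mulEquiv_ne_refl_fixing h3 hH,
      IsDetermining.of_closure_eq_top⟩
  simp only [detNumber, genNumber, hiff]
end

section
/- Let G be a finite abelian group, p an odd prime, and M a subgroup of index p in G. Then G has a non-identity automorphism that fixes every element of M. -/
/-!
Let `χ : G → ℤ/p` be a surjective character with kernel `M` and `z` an element of order `p`.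
Then `ψ x = x · z ^ χ(x)` is an endomorphism fixing `M` pointwise and moving any `x` with
`χ x = 1`. Since `χ (ψ x) = χ x · (1 + χ z)`, `ψ` is injective as soon as `1 + χ z ≠ 0`; if
`χ z = -1` we replace `z` by `z²`, for which `1 + χ (z²) = -1 ≠ 0` because `p ≠ 2`.
-/

open Function

section Transvection

variable {G : Type*} [CommGroup G] {n : ℕ} [NeZero n]
  (χ : G →* Multiplicative (ZMod n)) (z : G) (hz : z ^ n = 1)

def powOfChar : G →* G where
  toFun x := z ^ (χ x).toAdd.val
  map_one' := by simp
  map_mul' a b := by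
    rw [← pow_add, map_mul, toAdd_mul, ZMod.val_add, ← pow_eq_pow_mod _ hz]

def transvection : G →* G := MonoidHom.id G * powOfChar χ z hz

theorem transvection_apply (x : G) : transvection χ z hz x = x * z ^ (χ x).toAdd.val := rfl

theorem transvection_apply_of_mem_ker {x : G} (hx : x ∈ χ.ker) : transvection χ z hz x = x := by
  rw [transvection_apply, (MonoidHom.mem_ker).1 hx]
  simp

theorem transvection_injective (hu : IsUnit (1 + (χ z).toAdd)) :
    Injective (transvection χ z hz) := by
  rw [← MonoidHom.ker_eq_bot_iff, eq_bot_iff]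
  intro x hx
  have hψx : x * z ^ (χ x).toAdd.val = 1 := hx
  have hχx : (χ x).toAdd * (1 + (χ z).toAdd) = 0 := by
    have h := congrArg (fun g => (χ g).toAdd) hψx
    simp only [map_mul, map_pow, toAdd_mul, toAdd_pow, nsmul_eq_mul, ZMod.natCast_val,
      ZMod.cast_id', id, map_one, toAdd_one] at h
    linear_combination h
  rw [hu.mul_left_eq_zero] at hχx
  simpa [hχx] using hψx

theorem transvection_ne_id [Fact (1 < n)] (hχ : Surjective χ) (hz1 : z ≠ 1) :
    transvection χ z hz ≠ MonoidHom.id G := by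
  intro h
  obtain ⟨x, hx⟩ := hχ (Multiplicative.ofAdd 1)
  have hψx := DFunLike.congr_fun h x
  rw [transvection_apply, hx, toAdd_ofAdd, ZMod.val_one, pow_one, MonoidHom.id_apply,
    mul_eq_left] at hψx
  exact hz1 hψx

noncomputable def transvectionEquiv [Finite G] (hu : IsUnit (1 + (χ z).toAdd)) : G ≃* G :=
  MulEquiv.ofBijective (transvection χ z hz)
    (Finite.injective_iff_bijective.1 (transvection_injective χ z hz hu))

end Transvection

theorem Subgroup.exists_surjective_ker_eq_of_index_eq_prime {G : Type*} [Group G]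
    (M : Subgroup G) [M.Normal] {p : ℕ} [Fact p.Prime] (hidx : M.index = p) :
    ∃ χ : G →* Multiplicative (ZMod p), Surjective χ ∧ χ.ker = M := by
  have hcardZ : Nat.card (Multiplicative (ZMod p)) = p := by simp
  let e : G ⧸ M ≃* Multiplicative (ZMod p) := mulEquivOfPrimeCardEq hidx hcardZ
  refine ⟨(e : G ⧸ M →* Multiplicative (ZMod p)).comp (QuotientGroup.mk' M),
    e.surjective.comp (QuotientGroup.mk'_surjective M), ?_⟩
  rw [MonoidHom.ker_mulEquiv_comp, QuotientGroup.ker_mk']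

theorem exists_pow_prime_eq_one_one_add_toAdd_ne_zero {G : Type*} [Group G] [Finite G] {p : ℕ}
    [Fact p.Prime] (hodd : p ≠ 2) (hdvd : p ∣ Nat.card G) (χ : G →* Multiplicative (ZMod p)) :
    ∃ z : G, z ^ p = 1 ∧ z ≠ 1 ∧ 1 + (χ z).toAdd ≠ 0 := by
  have hp : p.Prime := Fact.out
  obtain ⟨z, hz⟩ := exists_prime_orderOf_dvd_card' p hdvd
  have of_orderOf_eq : ∀ w : G, orderOf w = p → w ^ p = 1 ∧ w ≠ 1 := fun w hw =>
    ⟨hw ▸ pow_orderOf_eq_one w, fun h => hp.one_lt.ne' (by rw [← hw, h, orderOf_one])⟩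
  by_cases hχz : 1 + (χ z).toAdd = 0
  · have hcop : (orderOf z).Coprime 2 := hz ▸ (Nat.coprime_primes hp Nat.prime_two).2 hodd
    have hz2 : orderOf (z ^ 2) = p := hcop.orderOf_pow.trans hz
    refine ⟨z ^ 2, (of_orderOf_eq _ hz2).1, (of_orderOf_eq _ hz2).2, ?_⟩
    rw [map_pow, toAdd_pow, two_nsmul, eq_neg_of_add_eq_zero_right hχz]
    norm_num
  · exact ⟨z, (of_orderOf_eq z hz).1, (of_orderOf_eq z hz).2, hχz⟩

theorem stmt16 {G : Type*} [CommGroup G] [Finite G] (p : ℕ) (hp : p.Prime)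
    (hodd : p ≠ 2) (M : Subgroup G) (hidx : M.index = p) :
    ∃ φ : G ≃* G, φ ≠ MulEquiv.refl G ∧ ∀ x ∈ M, φ x = x := by
  have : Fact p.Prime := ⟨hp⟩
  have : Fact (1 < p) := ⟨hp.one_lt⟩
  obtain ⟨χ, hχ, hker⟩ := M.exists_surjective_ker_eq_of_index_eq_prime hidx
  obtain ⟨z, hzp, hz1, hχz⟩ :=
    exists_pow_prime_eq_one_one_add_toAdd_ne_zero hodd (hidx ▸ M.index_dvd_card) χ
  refine ⟨transvectionEquiv χ z hzp (Ne.isUnit hχz), fun h => ?_, fun x hx => ?_⟩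
  · refine transvection_ne_id χ z hzp hχ hz1 (MonoidHom.ext fun x => ?_)
    exact DFunLike.congr_fun h x
  · exact transvection_apply_of_mem_ker χ z hzp (hker ▸ hx)
end
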